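/- Let V be a vector space over ℂ with ℤ-indexed bilinear products aₙb satisfying truncation and weak associativity (component forms), let λ ∈ ℂ, and let P : V → V be an ordinary Rota-Baxter operator of weight λ. Define a ≺ₙ b := aₙ(Pb) + λ·aₙb and a ≻ₙ b := (Pa)ₙb for n ∈ ℤ. Then (V,≺,≻) is a dendriform field algebra in component form: for all a,b,c ∈ V there exists N ∈ ℕ (depending only on a and c) such that the N-associativity identities hold at (a,b,c) simultaneously for (α,β;γ,δ) equal to (≺,≺;≺,≺+≻), to (≻,≺;≻,≺), and to (≺+≻,≻;≻,≻), where (≺+≻)ₙ(x,y) := x ≺ₙ y + x ≻ₙ y. -/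

import Mathlib

section Defs

variable {W : Type*} [AddCommGroup W] [Module ℂ W]

/-- Truncation: for all `a, b` the products `aₙb` vanish for `n` large. -/
def Truncation (μ : ℤ → W → W → W) : Prop :=
  ∀ a b : W, ∃ N : ℤ, ∀ n ≥ N, μ n a b = 0

/-- The generalized binomial coefficient `B(x,j) = x(x−1)⋯(x−j+1)/j!`. -/
noncomputable def genBinom (x : ℂ) (j : ℕ) : ℂ :=
  (∏ i ∈ Finset.range j, (x - (i : ℂ))) / (j.factorial : ℂ)

/-- The `N`-associativity identity for `(α,β;γ,δ)` at `(a,b,c)`: the coefficient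
form of `(z₀+z₂)^N β(α(a,z₀)b,z₂)c = (z₀+z₂)^N γ(a,z₀+z₂)δ(b,z₂)c`, where the
right-hand sum over `m ∈ ℤ, m ≤ N+p` is reindexed by `m ↦ N+p−m` with `m ∈ ℕ`. -/
def NAssocId (α β γ δ : ℤ → W → W → W) (N : ℕ) (a b c : W) : Prop :=
  ∀ p q : ℤ,
    ∑ i ∈ Finset.range (N + 1),
        (N.choose i : ℂ) • β (q + (N : ℤ) - (i : ℤ)) (α (p + (i : ℤ)) a b) c
      = ∑ᶠ m : ℕ,
        genBinom ((m : ℂ) - (p : ℂ) - 1) m • γ ((N : ℤ) + p - (m : ℤ)) a (δ (q + (m : ℤ)) b c)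

/-- Weak associativity in component form. -/
def WeakAssoc (μ : ℤ → W → W → W) : Prop :=
  ∀ a c : W, ∃ N : ℕ, ∀ b : W, NAssocId μ μ μ μ N a b c

end Defs

/-- An ordinary Rota-Baxter operator of weight `lam` on the ℤ-indexed products `μ`. -/
def OrdRBO {V : Type*} [AddCommGroup V] [Module ℂ V]
    (μ : ℤ → V →ₗ[ℂ] V →ₗ[ℂ] V) (P : V →ₗ[ℂ] V) (lam : ℂ) : Prop :=
  ∀ (n : ℤ) (a b : V),
    μ n (P a) (P b) = P (μ n (P a) b) + P (μ n a (P b)) + lam • P (μ n a b)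

/-!
With `Q := P + λ·id` one has `a ≺ₙ b = aₙ(Qb)`, and the Rota–Baxter identity gives
`P(a ≺ₙ b + a ≻ₙ b) = (Pa)ₙ(Pb)` and `Q(a ≺ₙ b + a ≻ₙ b) = (Qa)ₙ(Qb)`. Hence the three
dendriform identities at `(a, b, c)` are the associativity identities of the products at
`(a, Qb, Qc)`, `(Pa, b, Qc)` and `(Pa, Pb, c)`, and it only remains to find one `N` that serves
the pairs `(a, Qc)`, `(Pa, Qc)` and `(Pa, c)`. This is possible because, under truncation,
`N`-associativity implies `(N+1)`-associativity: both sides of the identity satisfy Pascal's rule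
in `N`, reflecting `(z₀+z₂)^(N+1) = (z₀+z₂)^N z₀ + (z₀+z₂)^N z₂`.
-/

open Finset Filter

theorem genBinom_eq_choose (x : ℂ) (j : ℕ) : genBinom x j = Ring.choose x j := by
  rw [Ring.choose_eq_smul, genBinom, smul_eq_mul, div_eq_inv_mul, ← Polynomial.aeval_eq_smeval,
    Polynomial.aeval_def, Polynomial.eval₂_eq_eval_map, descPochhammer_map,
    descPochhammer_eval_eq_prod_range]

theorem genBinom_succ_succ (x : ℂ) (k : ℕ) :
    genBinom (x + 1) (k + 1) = genBinom x k + genBinom x (k + 1) := by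
  simp only [genBinom_eq_choose, Ring.choose_succ_succ]

section Coeff

variable {V : Type*} [AddCommGroup V] [Module ℂ V]

/- The two sides of `NAssocId α β γ δ N a b c` at `(p, q)`, for `F m n = β n (α m a b) c` and
`G k l = γ k a (δ l b c)`. -/
def lhsCoeff (F : ℤ → ℤ → V) (N : ℕ) (p q : ℤ) : V :=
  ∑ i ∈ range (N + 1), (N.choose i : ℂ) • F (p + i) (q + N - i)

noncomputable def rhsCoeff (G : ℤ → ℤ → V) (N : ℕ) (p q : ℤ) : V :=
  ∑ᶠ m : ℕ, genBinom ((m : ℂ) - p - 1) m • G (N + p - m) (q + m)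

theorem lhsCoeff_eq_sum_nsmul (F : ℤ → ℤ → V) (N : ℕ) (p q : ℤ) :
    lhsCoeff F N p q = ∑ i ∈ range (N + 1), N.choose i • F (p + i) (q + (N - i : ℕ)) := by
  refine sum_congr rfl fun i hi => ?_
  rw [Nat.cast_smul_eq_nsmul, Nat.cast_sub (Nat.lt_succ_iff.mp (mem_range.mp hi)), add_sub_assoc]

theorem lhsCoeff_succ (F : ℤ → ℤ → V) (N : ℕ) (p q : ℤ) :
    lhsCoeff F (N + 1) p q = lhsCoeff F N (p + 1) q + lhsCoeff F N p (q + 1) := by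
  simp only [lhsCoeff_eq_sum_nsmul]
  rw [sum_choose_succ_nsmul (fun i j => F (p + i) (q + j)), add_comm]
  congr 1 <;> refine sum_congr rfl fun i hi => ?_
  · push_cast; ring_nf
  · have := mem_range.mp hi
    congr 2; omega

theorem rhsCoeff_eq_sum_range (G : ℤ → ℤ → V) (N : ℕ) (p q : ℤ) (M : ℕ)
    (hG : ∀ k, ∀ m ≥ M, G k (q + m) = 0) :
    rhsCoeff G N p q = ∑ m ∈ range M, genBinom ((m : ℂ) - p - 1) m • G (N + p - m) (q + m) := by
  refine finsum_eq_finsetSum_of_support_subset _ fun m hm => mem_range.mpr ?_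
  exact not_le.mp fun hmM => hm (by simp only [hG _ m hmM, smul_zero])

theorem rhsCoeff_succ (G : ℤ → ℤ → V) (T : ℤ) (hG : ∀ k l, T ≤ l → G k l = 0) (N : ℕ) (p q : ℤ) :
    rhsCoeff G (N + 1) p q = rhsCoeff G N (p + 1) q + rhsCoeff G N p (q + 1) := by
  set M := (T - q).toNat
  have hM : ∀ k, ∀ m ≥ M, G k (q + m) = 0 := fun k m hm => hG k _ (by omega)
  rw [rhsCoeff_eq_sum_range G _ _ q (M + 1) fun k m hm => hM k m (by omega),
    rhsCoeff_eq_sum_range G _ _ q (M + 1) fun k m hm => hM k m (by omega),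
    rhsCoeff_eq_sum_range G _ _ (q + 1) M fun k m hm => by rw [add_assoc]; exact hM k _ (by omega),
    sum_range_succ', sum_range_succ', add_right_comm, ← sum_add_distrib]
  congr 1
  · refine sum_congr rfl fun m _ => ?_
    rw [show ((m + 1 : ℕ) : ℂ) - p - 1 = ((m : ℂ) - p - 1) + 1 by push_cast; ring,
      genBinom_succ_succ, add_smul, add_comm]
    congr 2 <;> push_cast <;> ring_nf
  · simp only [genBinom_eq_choose, Ring.choose_zero_right]
    push_cast; ring_nf

end Coeff

section Assoc

variable {W : Type*} [AddCommGroup W] [Module ℂ W] {α β γ δ : ℤ → W → W → W} {N : ℕ} {a b c : W}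

theorem NAssocId.congr {α' β' γ' δ' : ℤ → W → W → W} {a' b' c' : W}
    (hl : ∀ m n, β n (α m a b) c = β' n (α' m a' b') c')
    (hr : ∀ k l, γ k a (δ l b c) = γ' k a' (δ' l b' c')) :
    NAssocId α β γ δ N a b c ↔ NAssocId α' β' γ' δ' N a' b' c' := by
  simp only [NAssocId, hl, hr]

theorem NAssocId.succ (hvan : ∃ T, ∀ k l, T ≤ l → γ k a (δ l b c) = 0)
    (h : NAssocId α β γ δ N a b c) : NAssocId α β γ δ (N + 1) a b c := by
  obtain ⟨T, hT⟩ := hvan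
  intro p q
  show lhsCoeff (fun m n => β n (α m a b) c) (N + 1) p q
    = rhsCoeff (fun k l => γ k a (δ l b c)) (N + 1) p q
  rw [lhsCoeff_succ, rhsCoeff_succ _ T hT]
  exact congrArg₂ (· + ·) (h (p + 1) q) (h p (q + 1))

theorem NAssocId.mono (hvan : ∃ T, ∀ k l, T ≤ l → γ k a (δ l b c) = 0)
    (h : NAssocId α β γ δ N a b c) {M : ℕ} (hNM : N ≤ M) : NAssocId α β γ δ M a b c :=
  Nat.le_induction h (fun _ _ ih => ih.succ hvan) M hNM

end Assoc

section LinearProducts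

variable {V : Type*} [AddCommGroup V] [Module ℂ V] {μ : ℤ → V →ₗ[ℂ] V →ₗ[ℂ] V}

theorem WeakAssoc.eventually (htr : Truncation (fun n (a b : V) => μ n a b))
    (hwa : WeakAssoc (fun n (a b : V) => μ n a b)) (a c : V) :
    ∀ᶠ N in atTop, ∀ b, NAssocId (fun n (a b : V) => μ n a b) (fun n (a b : V) => μ n a b)
      (fun n (a b : V) => μ n a b) (fun n (a b : V) => μ n a b) N a b c := by
  obtain ⟨N₀, h⟩ := hwa a c
  filter_upwards [eventually_ge_atTop N₀] with N hN b
  obtain ⟨T, hT⟩ := htr b c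
  exact (h b).mono ⟨T, fun k l hl => by simp [hT l hl]⟩ hN

variable {P : V →ₗ[ℂ] V} {lam : ℂ}

theorem OrdRBO.map_prec_add_succ (hP : OrdRBO μ P lam) (n : ℤ) (a b : V) :
    P (μ n a (P b + lam • b) + μ n (P a) b) = μ n (P a) (P b) := by
  rw [hP, map_add, map_add, map_smul, map_add, map_smul]
  abel

theorem OrdRBO.map_prec_add_succ_add_smul (hP : OrdRBO μ P lam) (n : ℤ) (a b : V) :
    P (μ n a (P b + lam • b) + μ n (P a) b) + lam • (μ n a (P b + lam • b) + μ n (P a) b)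
      = μ n (P a + lam • a) (P b + lam • b) := by
  rw [hP.map_prec_add_succ]
  simp only [map_add, map_smul, LinearMap.add_apply, LinearMap.smul_apply]
  module

end LinearProducts

/-- An ordinary Rota-Baxter operator of weight `lam` gives a dendriform field
algebra in component form, with `a ≺ₙ b = aₙ(Pb) + lam·aₙb` and `a ≻ₙ b = (Pa)ₙb`. -/
theorem stmt16 {V : Type*} [AddCommGroup V] [Module ℂ V]
    (μ : ℤ → V →ₗ[ℂ] V →ₗ[ℂ] V)
    (htr : Truncation (fun n (a b : V) => μ n a b))
    (hwa : WeakAssoc (fun n (a b : V) => μ n a b))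
    (lam : ℂ) (P : V →ₗ[ℂ] V) (hP : OrdRBO μ P lam) :
    let prec : ℤ → V → V → V := fun n a b => μ n a (P b) + lam • μ n a b
    let succ : ℤ → V → V → V := fun n a b => μ n (P a) b
    let sum : ℤ → V → V → V := fun n a b => prec n a b + succ n a b
    ∀ a c : V, ∃ N : ℕ, ∀ b : V,
      NAssocId prec prec prec sum N a b c ∧
      NAssocId succ prec succ prec N a b c ∧
      NAssocId sum succ succ succ N a b c := by
  intro prec succ sum a c
  have hprec (n : ℤ) (x y : V) : prec n x y = μ n x (P y + lam • y) := by
    simp only [prec, map_add, map_smul]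
  obtain ⟨N, h₁, h₂, h₃⟩ := ((WeakAssoc.eventually htr hwa a (P c + lam • c)).and
    ((WeakAssoc.eventually htr hwa (P a) (P c + lam • c)).and
      (WeakAssoc.eventually htr hwa (P a) c))).exists
  refine ⟨N, fun b => ⟨?_, ?_, ?_⟩⟩
  · refine (NAssocId.congr (fun m n => ?_) (fun k l => ?_)).2 (h₁ (P b + lam • b))
    · simp only [hprec]
    · simp only [hprec, sum, succ, hP.map_prec_add_succ_add_smul]
  · refine (NAssocId.congr (fun m n => ?_) (fun k l => ?_)).2 (h₂ b)
    · simp only [hprec, succ]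
    · simp only [hprec, succ]
  · refine (NAssocId.congr (fun m n => ?_) (fun k l => ?_)).2 (h₃ (P b))
    · simp only [hprec, sum, succ, hP.map_prec_add_succ]
    · rfl
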